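/- arXiv:2303.13760 — 3 statements merged into one kernel-verified Lean document; each statement's English description precedes it below -/
import Mathlib

section
/- If X and Y are independent exponential random variables with rates 1/λ_h and 1/λ_g respectively (λ_h, λ_g > 0), then the product Z = XY has probability density function f_Z(z) = (2/λ)·K₀(2√(z/λ)) for z > 0, where λ = λ_g·λ_h and K₀ is the modified Bessel function of the second kind of order 0. -/
open MeasureTheory ProbabilityTheory Real Filter Set

noncomputable def Ei (x : ℝ) : ℝ := ∫ t in Set.Iio x, Real.exp t / t
noncomputable def E1 (x : ℝ) : ℝ := ∫ t in Set.Ioi x, Real.exp (-t) / t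
noncomputable def besselK0 (x : ℝ) : ℝ := ∫ t in Set.Ici (0:ℝ), Real.exp (-(x * Real.cosh t))
noncomputable def besselK1 (x : ℝ) : ℝ :=
  ∫ t in Set.Ici (0:ℝ), Real.exp (-(x * Real.cosh t)) * Real.cosh t
noncomputable def besselI0 (x : ℝ) : ℝ :=
  ∑' m : ℕ, (x / 2) ^ (2 * m) / ((Nat.factorial m : ℝ)) ^ 2
noncomputable def E₀ : ℝ := -∫ x in Set.Ioi (0:ℝ), Real.exp (-x) * Real.log x


/-!
By independence, the law of `X * Y` is the multiplicative convolution of the two laws, and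
disintegrating along `X = x` (which is almost surely nonzero) shows that it has density
`z ↦ ∫ f_X(x) f_Y(z / x) / |x| dx`. For exponential laws and `z > 0` this is
`(1/λ) ∫₀^∞ exp(-(x/λ_h + z/(λ_g x))) dx/x`. The substitution `x = √(λ_h z/λ_g) eᵗ`
turns `dx/x` into `dt` and the exponent into `-2√(z/λ) cosh t`, whose integral over `ℝ` is
`2 K₀(2√(z/λ))` since `cosh` is even.
-/

open scoped ENNReal

lemma integrableOn_exp_neg_mul_cosh {b : ℝ} (hb : 0 < b) :
    IntegrableOn (fun t => exp (-(b * cosh t))) (Ici 0) := by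
  refine Integrable.mono' ((exp_neg_integrableOn_Ioi 0 hb).congr_set_ae Ioi_ae_eq_Ici.symm)
    (by fun_prop) ((ae_restrict_iff' measurableSet_Ici).2 (ae_of_all _ fun t ht => ?_))
  have ht_le : t ≤ cosh t := (self_le_sinh_iff.2 ht).trans (sinh_lt_cosh t).le
  rw [norm_of_nonneg (exp_pos _).le, exp_le_exp]
  nlinarith

lemma lintegral_exp_neg_mul_cosh {b : ℝ} (hb : 0 < b) :
    ∫⁻ t, ENNReal.ofReal (exp (-(b * cosh t))) = 2 * ENNReal.ofReal (besselK0 b) := by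
  set F := fun t : ℝ => ENNReal.ofReal (exp (-(b * cosh t)))
  have hIci : ∫⁻ t in Ici 0, F t = ENNReal.ofReal (besselK0 b) :=
    (ofReal_integral_eq_lintegral_ofReal (integrableOn_exp_neg_mul_cosh hb)
      (ae_of_all _ fun t => (exp_pos _).le)).symm
  have hIio : ∫⁻ t in Iio 0, F t = ∫⁻ t in Ici 0, F t := by
    rw [← neg_zero, ← image_neg_Ioi,
      lintegral_image_eq_lintegral_abs_deriv_mul measurableSet_Ioi
        (fun t _ => (hasDerivAt_neg t).hasDerivWithinAt) neg_injective.injOn,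
      Measure.restrict_congr_set Ioi_ae_eq_Ici]
    simp [F]
  rw [← lintegral_add_compl F measurableSet_Iio, compl_Iio, hIio, hIci, two_mul]

lemma lintegral_Ioi_exp_neg_mul_add_div_div {p q : ℝ} (hp : 0 < p) (hq : 0 < q) :
    ∫⁻ x in Ioi 0, ENNReal.ofReal (exp (-(p * x + q / x)) / x)
      = 2 * ENNReal.ofReal (besselK0 (2 * √(p * q))) := by
  set c := √q / √p
  have hc : 0 < c := by positivity
  have himage : (fun t => c * exp t) '' univ = Ioi 0 := by
    rw [← image_const_mul_Ioi_zero hc, ← range_exp, image_univ]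
    exact range_comp _ _
  rw [← himage, lintegral_image_eq_lintegral_abs_deriv_mul MeasurableSet.univ
      (fun t _ => ((hasDerivAt_exp t).const_mul c).hasDerivWithinAt)
      (fun s _ t _ h => exp_injective (mul_left_cancel₀ hc.ne' h)),
    Measure.restrict_univ, ← lintegral_exp_neg_mul_cosh (by positivity)]
  refine lintegral_congr fun t => ?_
  rw [← ENNReal.ofReal_mul (abs_nonneg _), abs_of_pos (by positivity)]
  congr 1
  have hp' : √p ^ 2 = p := sq_sqrt hp.le
  have hq' : √q ^ 2 = q := sq_sqrt hq.le
  have hexponent : p * (c * exp t) + q / (c * exp t) = 2 * √(p * q) * cosh t := by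
    rw [cosh_eq, exp_neg, sqrt_mul hp.le]
    conv_lhs => rw [← hp', ← hq']
    simp only [c]
    field_simp
  rw [hexponent]
  field_simp

lemma map_const_mul_withDensity {x : ℝ} (hx : x ≠ 0) (g : ℝ → ℝ≥0∞) :
    (volume.withDensity g).map (x * ·)
      = volume.withDensity fun z => ENNReal.ofReal |x⁻¹| * g (x⁻¹ * z) := by
  ext s hs
  have himage : (x⁻¹ * ·) '' s = (x * ·) ⁻¹' s := by
    ext y
    constructor
    · rintro ⟨w, hw, rfl⟩
      simpa [mul_inv_cancel_left₀ hx] using hw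
    · exact fun hy => ⟨x * y, hy, inv_mul_cancel_left₀ hx y⟩
  rw [Measure.map_apply (measurable_const_mul x) hs,
    withDensity_apply _ (measurable_const_mul x hs), withDensity_apply _ hs, ← himage,
    lintegral_image_eq_lintegral_abs_deriv_mul hs
      (fun z _ => (hasDerivAt_const_mul x⁻¹).hasDerivWithinAt)
      (mul_right_injective₀ (inv_ne_zero hx)).injOn]

/-- The density of a product of independent real random variables with densities `f` and `g`. -/
noncomputable def mulDensity (f g : ℝ → ℝ≥0∞) (z : ℝ) : ℝ≥0∞ :=
  ∫⁻ x, f x * (ENNReal.ofReal |x⁻¹| * g (x⁻¹ * z))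

lemma mconv_withDensity_eq_withDensity_mulDensity {f g : ℝ → ℝ≥0∞} (hf : Measurable f)
    (hg : Measurable g) :
    volume.withDensity f ∗ₘ volume.withDensity g = volume.withDensity (mulDensity f g) := by
  ext s hs
  have hmul : MeasurableSet ((fun p : ℝ × ℝ => p.1 * p.2) ⁻¹' s) := measurable_mul hs
  rw [Measure.mconv, Measure.map_apply measurable_mul hs, Measure.prod_apply hmul,
    lintegral_withDensity_eq_lintegral_mul _ hf (measurable_measure_prodMk_left hmul),
    withDensity_apply _ hs]
  calc _ = ∫⁻ x, ∫⁻ z in s, f x * (ENNReal.ofReal |x⁻¹| * g (x⁻¹ * z)) := by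
        refine lintegral_congr_ae ?_
        filter_upwards [Measure.ae_ne volume 0] with x hx
        rw [lintegral_const_mul _ (by fun_prop), ← withDensity_apply _ hs,
          ← map_const_mul_withDensity hx, Measure.map_apply (measurable_const_mul x) hs]
        rfl
    _ = _ := lintegral_lintegral_swap (by fun_prop)

noncomputable def expDensity (lam x : ℝ) : ℝ≥0∞ :=
  ENNReal.ofReal (if 0 ≤ x then (1 / lam) * exp (-(x / lam)) else 0)

lemma expDensity_eq_exponentialPDF (lam : ℝ) : expDensity lam = exponentialPDF lam⁻¹ := by
  ext x
  rw [exponentialPDF_eq, expDensity, one_div, div_eq_inv_mul]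

lemma measurable_expDensity (lam : ℝ) : Measurable (expDensity lam) := by
  rw [expDensity_eq_exponentialPDF]
  exact (measurable_exponentialPDFReal _).ennreal_ofReal

lemma expDensity_of_neg {lam x : ℝ} (hx : x < 0) : expDensity lam x = 0 := by
  rw [expDensity_eq_exponentialPDF, exponentialPDF_of_neg hx]

lemma isProbabilityMeasure_withDensity_expDensity {lam : ℝ} (hlam : 0 < lam) :
    IsProbabilityMeasure (volume.withDensity (expDensity lam)) := by
  rw [expDensity_eq_exponentialPDF]
  exact isProbabilityMeasure_expMeasure (inv_pos.2 hlam)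

lemma mulDensity_expDensity_of_neg (lamh lamg : ℝ) {z : ℝ} (hz : z < 0) :
    mulDensity (expDensity lamh) (expDensity lamg) z = 0 := by
  refine lintegral_eq_zero_of_ae_eq_zero (ae_of_all _ fun x => ?_)
  rcases lt_trichotomy x 0 with hx | rfl | hx
  · simp [expDensity_of_neg hx]
  · simp
  · simp [expDensity_of_neg (mul_neg_of_pos_of_neg (inv_pos.2 hx) hz)]

lemma mulDensity_expDensity_of_pos {lamh lamg : ℝ} (hh : 0 < lamh) (hg : 0 < lamg) {z : ℝ}
    (hz : 0 < z) :
    mulDensity (expDensity lamh) (expDensity lamg) z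
      = ENNReal.ofReal ((2 / (lamg * lamh)) * besselK0 (2 * √(z / (lamg * lamh)))) := by
  set F := fun x => expDensity lamh x * (ENNReal.ofReal |x⁻¹| * expDensity lamg (x⁻¹ * z))
  have hsupport : Function.support F ⊆ Ioi 0 := by
    intro x hx
    contrapose! hx
    rw [mem_Ioi, not_lt] at hx
    rcases hx.lt_or_eq with hneg | rfl
    · simp [F, expDensity_of_neg hneg]
    · simp [F]
  have hF : ∀ x ∈ Ioi (0 : ℝ), F x = ENNReal.ofReal (1 / (lamg * lamh))
      * ENNReal.ofReal (exp (-(lamh⁻¹ * x + z / lamg / x)) / x) := by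
    intro x (hx : 0 < x)
    simp only [F, expDensity, if_pos hx.le, if_pos (by positivity : 0 ≤ x⁻¹ * z),
      abs_of_pos (inv_pos.2 hx)]
    rw [← ENNReal.ofReal_mul (by positivity), ← ENNReal.ofReal_mul (by positivity),
      ← ENNReal.ofReal_mul (by positivity)]
    congr 1
    rw [neg_add, exp_add]
    field_simp
  rw [mulDensity, ← setLIntegral_eq_of_support_subset hsupport,
    setLIntegral_congr_fun measurableSet_Ioi hF, lintegral_const_mul' _ _ ENNReal.ofReal_ne_top,
    lintegral_Ioi_exp_neg_mul_add_div_div (inv_pos.2 hh) (div_pos hz hg),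
    ← mul_assoc, show (2 : ℝ≥0∞) = ENNReal.ofReal 2 by simp,
    ← ENNReal.ofReal_mul (by positivity), ← ENNReal.ofReal_mul (by positivity)]
  congr 1
  rw [show lamh⁻¹ * (z / lamg) = z / (lamg * lamh) by field_simp]
  ring

theorem stmt_1 {Ω : Type*} [MeasurableSpace Ω] (μ : Measure Ω) [IsProbabilityMeasure μ]
    (X Y : Ω → ℝ) (lamh lamg : ℝ) (hh : 0 < lamh) (hg : 0 < lamg)
    (hX : Measure.map X μ = MeasureTheory.volume.withDensity
      (fun x => ENNReal.ofReal (if 0 ≤ x then (1 / lamh) * Real.exp (-(x / lamh)) else 0)))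
    (hY : Measure.map Y μ = MeasureTheory.volume.withDensity
      (fun x => ENNReal.ofReal (if 0 ≤ x then (1 / lamg) * Real.exp (-(x / lamg)) else 0)))
    (hXY : IndepFun X Y μ) :
    Measure.map (fun ω => X ω * Y ω) μ = MeasureTheory.volume.withDensity
      (fun z => ENNReal.ofReal (if 0 < z then
        (2 / (lamg * lamh)) * besselK0 (2 * Real.sqrt (z / (lamg * lamh))) else 0)) := by
  change μ.map X = volume.withDensity (expDensity lamh) at hX
  change μ.map Y = volume.withDensity (expDensity lamg) at hY
  have hXm : AEMeasurable X μ := aemeasurable_of_map_neZero <| by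
    rw [hX]; have := isProbabilityMeasure_withDensity_expDensity hh; infer_instance
  have hYm : AEMeasurable Y μ := aemeasurable_of_map_neZero <| by
    rw [hY]; have := isProbabilityMeasure_withDensity_expDensity hg; infer_instance
  calc μ.map (X * Y) = μ.map X ∗ₘ μ.map Y := hXY.map_mul_eq_map_mconv_map₀ hXm hYm
    _ = volume.withDensity (mulDensity (expDensity lamh) (expDensity lamg)) := by
      rw [hX, hY, mconv_withDensity_eq_withDensity_mulDensity (measurable_expDensity _)
        (measurable_expDensity _)]
    _ = _ := by
      refine withDensity_congr_ae ?_
      filter_upwards [Measure.ae_ne volume 0] with z hz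
      rcases hz.lt_or_gt with hneg | hpos
      · rw [mulDensity_expDensity_of_neg _ _ hneg, if_neg hneg.not_gt, ENNReal.ofReal_zero]
      · rw [mulDensity_expDensity_of_pos hh hg hpos, if_pos hpos]
end

section
/- Let F(x) = 1 - 2√(x/λ)·K₁(2√(x/λ)) with density f(x) = (2/λ)·K₀(2√(x/λ)), λ > 0. Then lim_{x→∞} d/dx[(1-F(x))/f(x)] = 0. -/
/-!
Write `Jₙ(x) = ∫_{t ≥ 0} e^{-x cosh t} coshⁿ t`, so that `K₀ = J₀`, `K₁ = J₁` and `Jₙ' = -Jₙ₊₁`.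
Integrating `(e^{-x cosh t} sinh t)'` over `t ≥ 0` gives `x J₂ = J₁ + x J₀`, i.e.
`(x K₁(x))' = -x K₀(x)`. With `s = 2√(y/λ)` the reciprocal hazard rate is `(λ/2) s K₁(s)/K₀(s)`,
and this identity turns its derivative in `y` into `r(s)² - 1`, where `r = K₁/K₀`.
Finally `r ≥ 1` because `cosh ≥ 1`, while Cauchy–Schwarz `J₁² ≤ J₀ J₂` together with the identity
gives `s (r² - 1) ≤ r`, hence `r ≤ 1 + 1/s`, so `r(s) → 1` as `s → ∞`.
-/

open MeasureTheory ProbabilityTheory Real Filter Set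

open scoped Nat Topology

noncomputable def coshMoment (n : ℕ) (x : ℝ) : ℝ :=
  ∫ t in Ici (0 : ℝ), exp (-(x * cosh t)) * cosh t ^ n

lemma besselK0_eq_coshMoment_zero : besselK0 = coshMoment 0 := by
  ext x; simp [besselK0, coshMoment]

lemma besselK1_eq_coshMoment_one : besselK1 = coshMoment 1 := by
  ext x; simp [besselK1, coshMoment]

lemma self_le_cosh (t : ℝ) : t ≤ cosh t := by
  rcases le_total 0 t with ht | ht
  · exact (self_le_sinh_iff.2 ht).trans (sinh_lt_cosh t).le
  · linarith [one_le_cosh t]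

-- With `c = cosh t`: `cⁿ ≤ n! (2/a)ⁿ e^{ac/2}` by the exponential series, and `t ≤ c`.
lemma exp_neg_mul_cosh_mul_pow_le {a y : ℝ} (ha : 0 < a) (hay : a ≤ y) (n : ℕ) (t : ℝ) :
    exp (-(y * cosh t)) * cosh t ^ n ≤ n ! * (2 / a) ^ n * exp (-(a / 2) * t) := by
  have hpow : cosh t ^ n ≤ n ! * (2 / a) ^ n * exp (a / 2 * cosh t) := by
    have h := pow_div_factorial_le_exp (x := a / 2 * cosh t) (by positivity) n
    rw [div_le_iff₀ (by positivity)] at h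
    calc cosh t ^ n = (2 / a) ^ n * (a / 2 * cosh t) ^ n := by
          rw [← mul_pow]; field_simp
      _ ≤ (2 / a) ^ n * (exp (a / 2 * cosh t) * n !) := by gcongr
      _ = _ := by ring
  have hexp : exp (-(y * cosh t)) ≤ exp (-(a * cosh t)) := by gcongr
  calc exp (-(y * cosh t)) * cosh t ^ n
      ≤ exp (-(a * cosh t)) * (n ! * (2 / a) ^ n * exp (a / 2 * cosh t)) := by gcongr
    _ = n ! * (2 / a) ^ n * exp (-(a / 2) * cosh t) := by
          rw [mul_left_comm, ← exp_add]; ring_nf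
    _ ≤ n ! * (2 / a) ^ n * exp (-(a / 2) * t) := by
          gcongr _ * ?_; exact exp_le_exp.2 (by nlinarith [self_le_cosh t])

lemma integrableOn_exp_neg_mul_Ici {b : ℝ} (hb : 0 < b) (C : ℝ) :
    IntegrableOn (fun t => C * exp (-b * t)) (Ici 0) := by
  rw [integrableOn_Ici_iff_integrableOn_Ioi]
  exact (exp_neg_integrableOn_Ioi 0 hb).const_mul C

lemma integrableOn_exp_neg_mul_cosh_mul_pow {x : ℝ} (hx : 0 < x) (n : ℕ) :
    IntegrableOn (fun t => exp (-(x * cosh t)) * cosh t ^ n) (Ici 0) := by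
  refine (integrableOn_exp_neg_mul_Ici (half_pos hx) (n ! * (2 / x) ^ n)).mono' (by fun_prop)
    (ae_of_all _ fun t => ?_)
  rw [norm_of_nonneg (by positivity)]
  exact exp_neg_mul_cosh_mul_pow_le hx le_rfl n t

lemma hasDerivAt_coshMoment (n : ℕ) {x : ℝ} (hx : 0 < x) :
    HasDerivAt (coshMoment n) (-coshMoment (n + 1) x) x := by
  have h := hasDerivAt_integral_of_dominated_loc_of_deriv_le (μ := volume.restrict (Ici 0))
    (F := fun y t => exp (-(y * cosh t)) * cosh t ^ n)
    (F' := fun y t => -(exp (-(y * cosh t)) * cosh t ^ (n + 1)))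
    (Ioi_mem_nhds (half_lt_self hx)) (Eventually.of_forall fun y => by fun_prop)
    (integrableOn_exp_neg_mul_cosh_mul_pow hx n) (by fun_prop)
    (ae_of_all _ fun t y hy => ?_)
    (integrableOn_exp_neg_mul_Ici (half_pos (half_pos hx)) ((n + 1)! * (2 / (x / 2)) ^ (n + 1)))
    (ae_of_all _ fun t y _ => ?_)
  · rw [integral_neg] at h
    exact h.2
  · rw [norm_neg, norm_of_nonneg (by positivity)]
    exact exp_neg_mul_cosh_mul_pow_le (half_pos hx) (le_of_lt hy) (n + 1) t
  · have hlin : HasDerivAt (fun y => -(y * cosh t)) (-cosh t) y := by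
      simpa using ((hasDerivAt_id y).mul_const (cosh t)).fun_neg
    exact (hlin.exp.mul_const (cosh t ^ n)).congr_deriv (by ring)

lemma coshMoment_pos {x : ℝ} (hx : 0 < x) (n : ℕ) : 0 < coshMoment n x := by
  rw [coshMoment, setIntegral_pos_iff_support_of_nonneg_ae
    (ae_of_all _ fun t => by positivity) (integrableOn_exp_neg_mul_cosh_mul_pow hx n)]
  have hsupp : Function.support (fun t => exp (-(x * cosh t)) * cosh t ^ n) = univ :=
    Function.support_eq_univ fun t => by positivity
  simp [hsupp]

lemma coshMoment_le_succ {x : ℝ} (hx : 0 < x) (n : ℕ) : coshMoment n x ≤ coshMoment (n + 1) x :=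
  setIntegral_mono_on (integrableOn_exp_neg_mul_cosh_mul_pow hx n)
    (integrableOn_exp_neg_mul_cosh_mul_pow hx (n + 1)) measurableSet_Ici fun t _ => by
      gcongr
      exacts [one_le_cosh t, n.le_succ]

lemma coshMoment_succ_sq_le {x : ℝ} (hx : 0 < x) (n : ℕ) :
    coshMoment (n + 1) x ^ 2 ≤ coshMoment n x * coshMoment (n + 2) x := by
  have hint := integrableOn_exp_neg_mul_cosh_mul_pow hx
  have hquad (u : ℝ) : 0 ≤ coshMoment n x * (u * u) + (-2 * coshMoment (n + 1) x) * u
      + coshMoment (n + 2) x := by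
    have hexpand : ∫ t in Ici (0 : ℝ), exp (-(x * cosh t)) * cosh t ^ n * (u - cosh t) ^ 2
        = ∫ t in Ici (0 : ℝ), (u * u) * (exp (-(x * cosh t)) * cosh t ^ n)
          - 2 * u * (exp (-(x * cosh t)) * cosh t ^ (n + 1))
          + exp (-(x * cosh t)) * cosh t ^ (n + 2) := by
      congr 1; ext t; ring
    have hnonneg : 0 ≤ ∫ t in Ici (0 : ℝ), exp (-(x * cosh t)) * cosh t ^ n * (u - cosh t) ^ 2 :=
      setIntegral_nonneg measurableSet_Ici fun t _ => by positivity
    have hsub : IntegrableOn (fun t => (u * u) * (exp (-(x * cosh t)) * cosh t ^ n)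
        - 2 * u * (exp (-(x * cosh t)) * cosh t ^ (n + 1))) (Ici 0) :=
      ((hint n).const_mul _).sub ((hint _).const_mul _)
    rw [hexpand, integral_add hsub (hint _), integral_sub ((hint n).const_mul _)
      ((hint _).const_mul _), integral_const_mul, integral_const_mul] at hnonneg
    simp only [coshMoment]
    linarith
  have := discrim_le_zero hquad
  rw [discrim] at this
  linarith

lemma mul_coshMoment_two {x : ℝ} (hx : 0 < x) :
    x * coshMoment 2 x = coshMoment 1 x + x * coshMoment 0 x := by
  set g : ℕ → ℝ → ℝ := fun n t => exp (-(x * cosh t)) * cosh t ^ n with hg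
  have hint (n : ℕ) : IntegrableOn (g n) (Ioi 0) :=
    (integrableOn_exp_neg_mul_cosh_mul_pow hx n).mono_set Ioi_subset_Ici_self
  have hderiv (t : ℝ) : HasDerivAt (fun t => exp (-(x * cosh t)) * sinh t)
      (g 1 t - x * g 2 t + x * g 0 t) t := by
    have h := ((hasDerivAt_cosh t).const_mul x).fun_neg.exp.fun_mul (hasDerivAt_sinh t)
    refine h.congr_deriv ?_
    simp only [hg]
    linear_combination (x * exp (-(x * cosh t))) * cosh_sq_sub_sinh_sq t
  have hlim : Tendsto (fun t => exp (-(x * cosh t)) * sinh t) atTop (𝓝 0) := by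
    have hdecay : Tendsto (fun t => 1 ! * (2 / x) ^ 1 * exp (-(x / 2) * t)) atTop (𝓝 0) := by
      simpa using (tendsto_exp_atBot.comp
        (tendsto_id.const_mul_atTop_of_neg (by linarith : -(x / 2) < 0))).const_mul (2 / x)
    refine squeeze_zero' ?_ ?_ hdecay
    · filter_upwards [eventually_ge_atTop 0] with t ht
      have := sinh_nonneg_iff.2 ht
      positivity
    · filter_upwards with t
      refine le_trans ?_ (exp_neg_mul_cosh_mul_pow_le hx le_rfl 1 t)
      gcongr
      simpa using (sinh_lt_cosh t).le
  have hibp := integral_Ioi_of_hasDerivAt_of_tendsto' (fun t _ => hderiv t)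
    (((hint 1).sub ((hint 2).const_mul x)).add ((hint 0).const_mul x)) hlim
  rw [integral_add ?_ ((hint 0).const_mul x), integral_sub (hint 1) ((hint 2).const_mul x),
    integral_const_mul, integral_const_mul] at hibp
  · simp only [coshMoment, integral_Ici_eq_integral_Ioi]
    simp only [sinh_zero, mul_zero, sub_zero] at hibp
    linarith
  · exact (hint 1).sub ((hint 2).const_mul x)

lemma besselK0_pos {x : ℝ} (hx : 0 < x) : 0 < besselK0 x :=
  besselK0_eq_coshMoment_zero ▸ coshMoment_pos hx 0

lemma hasDerivAt_besselK0 {x : ℝ} (hx : 0 < x) : HasDerivAt besselK0 (-besselK1 x) x := by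
  rw [besselK0_eq_coshMoment_zero, besselK1_eq_coshMoment_one]
  exact hasDerivAt_coshMoment 0 hx

lemma hasDerivAt_mul_besselK1 {x : ℝ} (hx : 0 < x) :
    HasDerivAt (fun s => s * besselK1 s) (-(x * besselK0 x)) x := by
  rw [besselK0_eq_coshMoment_zero, besselK1_eq_coshMoment_one]
  refine ((hasDerivAt_id x).mul (hasDerivAt_coshMoment 1 hx)).congr_deriv ?_
  simp only [id, one_mul]
  linarith [mul_coshMoment_two hx]

lemma one_le_besselK1_div_besselK0 {x : ℝ} (hx : 0 < x) : 1 ≤ besselK1 x / besselK0 x := by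
  rw [besselK0_eq_coshMoment_zero, besselK1_eq_coshMoment_one,
    one_le_div (coshMoment_pos hx 0)]
  exact coshMoment_le_succ hx 0

lemma besselK1_div_besselK0_le {x : ℝ} (hx : 0 < x) :
    besselK1 x / besselK0 x ≤ 1 + x⁻¹ := by
  have hr := one_le_besselK1_div_besselK0 hx
  set r := besselK1 x / besselK0 x
  have hK0 := besselK0_pos hx
  have hK1 : besselK1 x = r * besselK0 x := (div_mul_cancel₀ _ hK0.ne').symm
  have hquad : x * (r ^ 2 - 1) ≤ r := by
    have hcs := coshMoment_succ_sq_le hx 0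
    have hid := mul_coshMoment_two hx
    rw [← besselK0_eq_coshMoment_zero, ← besselK1_eq_coshMoment_one] at hcs hid
    rw [hK1] at hcs hid
    have : x * (r ^ 2 - 1) * besselK0 x ^ 2 ≤ r * besselK0 x ^ 2 := by nlinarith
    exact le_of_mul_le_mul_right this (by positivity)
  have hlin : x * (r - 1) ≤ 1 := by nlinarith
  have : r - 1 ≤ x⁻¹ := by rwa [← one_div, le_div_iff₀' hx]
  linarith

lemma tendsto_besselK1_div_besselK0_atTop :
    Tendsto (fun x => besselK1 x / besselK0 x) atTop (𝓝 1) := by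
  have hupper : Tendsto (fun x : ℝ => 1 + x⁻¹) atTop (𝓝 1) := by
    simpa using tendsto_inv_atTop_zero.const_add (1 : ℝ)
  refine tendsto_of_tendsto_of_tendsto_of_le_of_le' tendsto_const_nhds hupper ?_ ?_
  · filter_upwards [eventually_gt_atTop 0] with x hx using one_le_besselK1_div_besselK0 hx
  · filter_upwards [eventually_gt_atTop 0] with x hx using besselK1_div_besselK0_le hx

lemma hasDerivAt_mul_besselK1_div_besselK0 {x : ℝ} (hx : 0 < x) :
    HasDerivAt (fun s => s * besselK1 s / besselK0 s)
      (x * ((besselK1 x / besselK0 x) ^ 2 - 1)) x := by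
  have hK0 := (besselK0_pos hx).ne'
  refine ((hasDerivAt_mul_besselK1 hx).div (hasDerivAt_besselK0 hx) hK0).congr_deriv ?_
  field_simp
  ring

lemma hasDerivAt_reciprocalHazard {lam x : ℝ} (hlam : 0 < lam) (hx : 0 < x) :
    HasDerivAt (fun y : ℝ =>
      (1 - (1 - 2 * √(y / lam) * besselK1 (2 * √(y / lam)))) /
        ((2 / lam) * besselK0 (2 * √(y / lam))))
      ((besselK1 (2 * √(x / lam)) / besselK0 (2 * √(x / lam))) ^ 2 - 1) x := by
  have hs : HasDerivAt (fun y => 2 * √(y / lam)) (2 * (1 / (2 * √(x / lam)) * (1 / lam))) x :=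
    ((hasDerivAt_sqrt (div_pos hx hlam).ne').comp x ((hasDerivAt_id x).div_const lam)).const_mul 2
  have h := ((hasDerivAt_mul_besselK1_div_besselK0 (by positivity)).comp x hs).const_mul (lam / 2)
  have hfun : (fun y : ℝ => (1 - (1 - 2 * √(y / lam) * besselK1 (2 * √(y / lam)))) /
        ((2 / lam) * besselK0 (2 * √(y / lam))))
      = fun y => lam / 2 * (2 * √(y / lam) * besselK1 (2 * √(y / lam)) /
        besselK0 (2 * √(y / lam))) := by
    funext y
    field_simp
    ring
  rw [hfun]
  refine h.congr_deriv ?_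
  field_simp

theorem stmt_11 (lam : ℝ) (hlam : 0 < lam) :
    Filter.Tendsto (fun x : ℝ => deriv (fun y : ℝ =>
      (1 - (1 - 2 * Real.sqrt (y / lam) * besselK1 (2 * Real.sqrt (y / lam)))) /
        ((2 / lam) * besselK0 (2 * Real.sqrt (y / lam)))) x)
      Filter.atTop (nhds 0) := by
  have hs : Tendsto (fun x => 2 * √(x / lam)) atTop atTop :=
    (tendsto_sqrt_atTop.comp (tendsto_id.atTop_div_const hlam)).const_mul_atTop two_pos
  have hlim : Tendsto (fun x => (besselK1 (2 * √(x / lam)) / besselK0 (2 * √(x / lam))) ^ 2 - 1)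
      atTop (𝓝 0) := by
    simpa using ((tendsto_besselK1_div_besselK0_atTop.comp hs).pow 2).sub_const 1
  refine hlim.congr' ?_
  filter_upwards [eventually_gt_atTop 0] with x hx
    using (hasDerivAt_reciprocalHazard hlam hx).deriv.symm
end

section
/- Let a_K = (λ/4)·(ln(K√(π/2)) + (1/2)ln(ln(K√π·λ^{-1/4})))² and b_K = (λ/2)·ln(K√π·λ^{-1/4}) with λ > 0. Then, for any constants c > 0 and E₀ ∈ (0,1), the quantity (E₀/N)·log₂(1 + c(a_K + b_K)) + ((1-E₀)/N)·log₂(1 + c·a_K) grows asymptotically like (2/(N ln 2))·ln(ln K) as K → ∞, i.e., the ratio of the expression to ln(ln K) converges to 2/(N ln 2). -/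
open MeasureTheory ProbabilityTheory Real Filter Set

/-!
Write `a_K = (λ/4) g(K)²` with `g x = log (x s) + ½ log (log (x t))`, `s = √(π/2)`,
`t = √π λ^(-1/4)`. Since constants and `log log x` are negligible against `log x`, we have
`g ~ log`, so `a_K ~ (λ/4) (log K)²`, while `b_K = O(log K)` is negligible against `(log K)²`.
Both arguments of `logb 2` are therefore `~ (cλ/4) (log K)²`, and their
logarithms are `2 log log K + O(1)`. The weights `e0/N` and `(1 - e0)/N` add up to `1/N`.
-/

open Asymptotics Topology

lemma isEquivalent_log_mul_const {s : ℝ} (hs : s ≠ 0) :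
    (fun x => log (x * s)) ~[atTop] log := by
  have hsum : (fun x => log s + log x) ~[atTop] log :=
    isLittleO_const_log_atTop.add_isEquivalent IsEquivalent.refl
  refine hsum.congr_left ?_
  filter_upwards [eventually_ne_atTop 0] with x hx
  rw [log_mul hx hs, add_comm]

lemma isLittleO_log_log_mul_const {t : ℝ} (ht : t ≠ 0) :
    (fun x => log (log (x * t))) =o[atTop] log := by
  have hlog := isEquivalent_log_mul_const ht
  exact (isLittleO_log_id_atTop.comp_tendsto
    (hlog.symm.tendsto_atTop tendsto_log_atTop)).trans_isEquivalent hlog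

lemma isEquivalent_log_mul_const_add_log_log {s t : ℝ} (hs : s ≠ 0) (ht : t ≠ 0) (r : ℝ) :
    (fun x => log (x * s) + r * log (log (x * t))) ~[atTop] log :=
  (isEquivalent_log_mul_const hs).add_isLittleO
    ((isLittleO_log_log_mul_const ht).const_mul_left r)

lemma Asymptotics.IsEquivalent.log_of_const_mul {α : Type*} {l : Filter α} {u w : α → ℝ}
    {k : ℝ} (hk : 0 < k) (hu : u ~[l] fun x => k * w x) (hw : Tendsto w l atTop) :
    (fun x => Real.log (u x)) ~[l] fun x => Real.log (w x) := by
  have hsum : (fun x => Real.log k + Real.log (w x)) ~[l] fun x => Real.log (w x) :=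
    (isLittleO_const_log_atTop.comp_tendsto hw).add_isEquivalent IsEquivalent.refl
  refine (hu.log (hw.const_mul_atTop hk)).trans (hsum.congr_left ?_)
  filter_upwards [hw.eventually_gt_atTop 0] with x hx
  rw [log_mul hk.ne' hx.ne']

lemma tendsto_log_one_add_mul_div_log_log {g b : ℝ → ℝ} {k c : ℝ} (hk : 0 < k) (hc : 0 < c)
    (hg : g ~[atTop] log) (hb : b =o[atTop] fun x => log x ^ 2) :
    Tendsto (fun x => log (1 + c * (k * g x ^ 2 + b x)) / log (log x)) atTop (𝓝 2) := by
  have hlog2 : Tendsto (fun x => log x ^ 2) atTop atTop :=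
    (tendsto_pow_atTop two_ne_zero).comp tendsto_log_atTop
  have hquad : (fun x => k * g x ^ 2 + b x) ~[atTop] fun x => k * log x ^ 2 :=
    (IsEquivalent.refl.mul (hg.pow 2)).add_isLittleO (hb.const_mul_right hk.ne')
  have hscaled : (fun x => c * (k * g x ^ 2 + b x)) ~[atTop] fun x => (c * k) * log x ^ 2 :=
    ((IsEquivalent.refl (u := fun _ => c)).smul hquad).congr_right
      (Eventually.of_forall fun x => (mul_assoc c k _).symm)
  have hone : (fun x => 1 + c * (k * g x ^ 2 + b x)) ~[atTop] fun x => (c * k) * log x ^ 2 :=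
    hscaled.const_add_of_norm_tendsto_atTop
      (tendsto_norm_atTop_atTop.comp (hlog2.const_mul_atTop (mul_pos hc hk)))
  have hlog : (fun x => log (1 + c * (k * g x ^ 2 + b x))) ~[atTop] fun x => 2 * log (log x) :=
    (hone.log_of_const_mul (mul_pos hc hk) hlog2).congr_right
      (Eventually.of_forall fun x => by simp only [log_pow, Nat.cast_ofNat])
  have hratio : Tendsto (fun x => 2 * log (log x) / log (log x)) atTop (𝓝 2) :=
    tendsto_const_nhds.congr' <| by
      filter_upwards [(tendsto_log_atTop.comp tendsto_log_atTop).eventually_ne_atTop 0]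
        with x hx using (mul_div_cancel_right₀ 2 hx).symm
  exact (hlog.div IsEquivalent.refl).symm.tendsto_nhds hratio

theorem stmt_15_general (lam N c e0 : ℝ) (hlam : 0 < lam) (hc : 0 < c) :
    Filter.Tendsto (fun K : ℕ =>
      ((e0 / N) * Real.logb 2 (1 + c *
          ((lam / 4) * (Real.log ((K:ℝ) * Real.sqrt (Real.pi / 2))
              + (1 / 2) * Real.log (Real.log ((K:ℝ) * Real.sqrt Real.pi * lam ^ (-(1/4) : ℝ)))) ^ 2
            + (lam / 2) * Real.log ((K:ℝ) * Real.sqrt Real.pi * lam ^ (-(1/4) : ℝ))))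
        + ((1 - e0) / N) * Real.logb 2 (1 + c *
          ((lam / 4) * (Real.log ((K:ℝ) * Real.sqrt (Real.pi / 2))
              + (1 / 2) * Real.log (Real.log ((K:ℝ) * Real.sqrt Real.pi * lam ^ (-(1/4) : ℝ)))) ^ 2)))
      / Real.log (Real.log (K:ℝ)))
      Filter.atTop (nhds (2 / (N * Real.log 2))) := by
  have hs : √(π / 2) ≠ 0 := by positivity
  have ht : √π * lam ^ (-(1/4) : ℝ) ≠ 0 := by positivity
  have hg := isEquivalent_log_mul_const_add_log_log hs ht (1 / 2)
  have hb : (fun x => lam / 2 * log (x * (√π * lam ^ (-(1/4) : ℝ)))) =o[atTop]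
      fun x => log x ^ 2 := by
    refine IsLittleO.const_mul_left ?_ _
    refine (isEquivalent_log_mul_const ht).isBigO.trans_isLittleO ?_
    simpa only [Function.comp_def, pow_one] using
      (isLittleO_pow_pow_atTop_of_lt (𝕜 := ℝ) one_lt_two).comp_tendsto tendsto_log_atTop
  have hk : 0 < lam / 4 := by positivity
  have hlim :=
    ((tendsto_log_one_add_mul_div_log_log hk hc hg hb).const_mul (e0 / (N * log 2))).add
      ((tendsto_log_one_add_mul_div_log_log hk hc hg (isLittleO_zero _ _)).const_mul
        ((1 - e0) / (N * log 2)))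
  rw [show e0 / (N * log 2) * 2 + (1 - e0) / (N * log 2) * 2 = 2 / (N * log 2) by ring] at hlim
  refine (hlim.comp tendsto_natCast_atTop_atTop).congr fun K => ?_
  simp only [Function.comp, logb, mul_assoc, add_zero]
  ring

theorem stmt_15 (lam N c e0 : ℝ) (hlam : 0 < lam) (hN : 0 < N) (hc : 0 < c)
    (he : e0 ∈ Set.Ioo (0:ℝ) 1) :
    Filter.Tendsto (fun K : ℕ =>
      ((e0 / N) * Real.logb 2 (1 + c *
          ((lam / 4) * (Real.log ((K:ℝ) * Real.sqrt (Real.pi / 2))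
              + (1 / 2) * Real.log (Real.log ((K:ℝ) * Real.sqrt Real.pi * lam ^ (-(1/4) : ℝ)))) ^ 2
            + (lam / 2) * Real.log ((K:ℝ) * Real.sqrt Real.pi * lam ^ (-(1/4) : ℝ))))
        + ((1 - e0) / N) * Real.logb 2 (1 + c *
          ((lam / 4) * (Real.log ((K:ℝ) * Real.sqrt (Real.pi / 2))
              + (1 / 2) * Real.log (Real.log ((K:ℝ) * Real.sqrt Real.pi * lam ^ (-(1/4) : ℝ)))) ^ 2)))
      / Real.log (Real.log (K:ℝ)))
      Filter.atTop (nhds (2 / (N * Real.log 2))) :=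
  stmt_15_general lam N c e0 hlam hc
end
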